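/- arXiv:2401.02354 — 7 statements merged into one kernel-verified Lean document; each statement's English description precedes it below -/
import Mathlib

section
/- Let A = ι →₀ ℕ be a transitive finite-rank ℕSet algebra that is a fusion semiring with involution σ, and let φ be its Frobenius–Perron character. Suppose ε : ι → ℕ satisfies ε(i) ≥ 1 for all i, together with the relations ε(k)·N(i,j,σ(k)) = ε(j)·N(k,i,σ(j)) = ε(i)·N(j,k,σ(i)) and N(i,j,σ(k)) = N(σ(j),σ(i),k) for all i, j, k ∈ ι. Then the vector R : ι → ℝ defined by R(k) := φ(e_k)/ε(k) is a regular element of A; that is, R(k) > 0 for all k and a ⋆ R = φ(a) • R for every a ∈ ι →₀ ℕ. (In the paper, A is the fusion semiring of a fusion category C over a field K and ε(X) = dim_E End(X) where E = End(𝟙); the displayed relations are those of the cyclic permutation lemma.) -/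
open Finsupp

/-- An ℕSet algebra: an associative multiplication on the free commutative monoid
`ι →₀ ℕ`, additive in each argument, with a two-sided unit. -/
structure NSetAlgebra (ι : Type*) where
  mul : (ι →₀ ℕ) → (ι →₀ ℕ) → (ι →₀ ℕ)
  one : ι →₀ ℕ
  mul_assoc : ∀ a b c, mul (mul a b) c = mul a (mul b c)
  one_mul : ∀ a, mul one a = a
  mul_one : ∀ a, mul a one = a
  left_distrib : ∀ a b c, mul a (b + c) = mul a b + mul a c
  right_distrib : ∀ a b c, mul (a + b) c = mul a c + mul b c
  zero_mul : ∀ a, mul 0 a = 0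
  mul_zero : ∀ a, mul a 0 = 0

namespace NSetAlgebra

variable {ι : Type*}

/-- The structure constants `N(i,j,k) = (e_i * e_j)(k)`. -/
noncomputable def N (A : NSetAlgebra ι) (i j k : ι) : ℕ :=
  A.mul (Finsupp.single i 1) (Finsupp.single j 1) k

/-- Transitivity: for all simple `i, j` there are `u, v` with
`e_j ≤ e_u * e_i` and `e_j ≤ e_i * e_v`. -/
def Transitive (A : NSetAlgebra ι) : Prop :=
  ∀ i j : ι, (∃ u, Finsupp.single j 1 ≤ A.mul (Finsupp.single u 1) (Finsupp.single i 1)) ∧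
             (∃ v, Finsupp.single j 1 ≤ A.mul (Finsupp.single i 1) (Finsupp.single v 1))

/-- A Frobenius–Perron character: additive, multiplicative, unital,
and strictly positive on simple elements. -/
structure IsFPCharacter (A : NSetAlgebra ι) (φ : (ι →₀ ℕ) → ℝ) : Prop where
  map_add : ∀ a b, φ (a + b) = φ a + φ b
  map_mul : ∀ a b, φ (A.mul a b) = φ a * φ b
  map_one : φ A.one = 1
  pos : ∀ i, 0 < φ (Finsupp.single i 1)

/-- The ℝ-bilinear extension of the multiplication to vectors `ι → ℝ`:
`(r ⋆ s)(k) = ∑ i j, r i * s j * N i j k`. -/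
noncomputable def starMul [Fintype ι] (A : NSetAlgebra ι) (r s : ι → ℝ) : ι → ℝ :=
  fun k => ∑ i : ι, ∑ j : ι, r i * s j * (A.N i j k : ℝ)

/-- A fusion semiring structure: an involution `σ` such that for all simples `i, j`,
`j = σ i` iff there is a unique simple `k` with `e_k ≤ 1 ∩ (e_i * e_j)`,
iff there is a unique simple `k` with `e_k ≤ 1 ∩ (e_j * e_i)`. -/
structure IsFusionSemiring (A : NSetAlgebra ι) (σ : ι → ι) : Prop where
  involutive : ∀ i, σ (σ i) = i
  dual_iff : ∀ i j : ι,
    (∃! k, Finsupp.single k 1 ≤ A.one ∧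
        Finsupp.single k 1 ≤ A.mul (Finsupp.single i 1) (Finsupp.single j 1)) ↔ j = σ i
  dual_iff' : ∀ i j : ι,
    (∃! k, Finsupp.single k 1 ≤ A.one ∧
        Finsupp.single k 1 ≤ A.mul (Finsupp.single j 1) (Finsupp.single i 1)) ↔ j = σ i

/-- A regular element: a strictly positive vector `R` with `e_i ⋆ R = φ(e_i) • R`
for every simple `i`. -/
noncomputable def IsRegular [Fintype ι] (A : NSetAlgebra ι) (φ : (ι →₀ ℕ) → ℝ)
    (R : ι → ℝ) : Prop :=
  (∀ i, 0 < R i) ∧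
  ∀ i : ι, A.starMul (fun k => ((Finsupp.single i 1 : ι →₀ ℕ) k : ℝ)) R
    = φ (Finsupp.single i 1) • R

end NSetAlgebra

/-- The real vector underlying an element of `ι →₀ ℕ`. -/
def toRealVec {ι : Type*} (a : ι →₀ ℕ) : ι → ℝ := fun k => (a k : ℝ)

/-- The ℝ-linear extension of an additive map `(ι →₀ ℕ) → (κ →₀ ℕ)` to vectors. -/
noncomputable def linExt {ι κ : Type*} [Fintype ι]
    (f : (ι →₀ ℕ) → (κ →₀ ℕ)) (r : ι → ℝ) : κ → ℝ :=
  fun x => ∑ i : ι, r i * (f (Finsupp.single i 1) x : ℝ)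


/-!
Cross-multiplying the cyclic relations gives `ε k · N(i,j,k) = ε j · N(σ i,k,j)` once one
knows `ε ∘ σ = ε`, and the latter follows by comparing the two relations at a pair with
`N(u,k,k) ≠ 0`, which transitivity provides. Summing over `j` against `FPdim(e_j)` shows
that `R = FPdim / ε` is an eigenvector of left multiplication by `e_i` with eigenvalue
`FPdim(e_{σ i})`. Pairing any positive eigenvector with the positive vector `FPdim` forces its
eigenvalue to be `FPdim(e_i)`.
-/

namespace NSetAlgebra

variable {ι : Type*} {A : NSetAlgebra ι}

theorem Transitive.exists_N_pos (hA : A.Transitive) (j k : ι) : ∃ u, 0 < A.N u j k := by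
  obtain ⟨u, hu⟩ := (hA j k).1
  exact ⟨u, (by simpa [N] using hu k : 1 ≤ A.N u j k)⟩

theorem starMul_toRealVec_apply [Fintype ι] (a : ι →₀ ℕ) (R : ι → ℝ) (k : ι) :
    A.starMul (toRealVec a) R k = ∑ i, (a i : ℝ) * ∑ j, R j * A.N i j k := by
  simp only [starMul, toRealVec, Finset.mul_sum, _root_.mul_assoc]

namespace IsFPCharacter

variable {φ : (ι →₀ ℕ) → ℝ}

noncomputable def toAddMonoidHom (hφ : A.IsFPCharacter φ) : (ι →₀ ℕ) →+ ℝ :=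
  AddMonoidHom.mk' φ hφ.map_add

variable [Fintype ι]

theorem apply_eq_sum (hφ : A.IsFPCharacter φ) (a : ι →₀ ℕ) :
    φ a = ∑ k, (a k : ℝ) * φ (single k 1) := by
  change hφ.toAddMonoidHom a = ∑ k, (a k : ℝ) * hφ.toAddMonoidHom (single k 1)
  conv_lhs => rw [← Finsupp.univ_sum_single a]
  rw [map_sum]
  refine Finset.sum_congr rfl fun k _ => ?_
  rw [← Finsupp.smul_single_one, map_nsmul, nsmul_eq_mul]

theorem sum_N_mul (hφ : A.IsFPCharacter φ) (i j : ι) :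
    ∑ k, (A.N i j k : ℝ) * φ (single k 1) = φ (single i 1) * φ (single j 1) := by
  rw [← hφ.map_mul, hφ.apply_eq_sum]
  rfl

theorem eigenvalue_eq_of_pos (hφ : A.IsFPCharacter φ) {R : ι → ℝ} (hR : ∀ k, 0 < R k)
    {i : ι} {c : ℝ} (hc : ∀ k, ∑ j, R j * A.N i j k = c * R k) : c = φ (single i 1) := by
  have hpair : 0 < ∑ k, R k * φ (single k 1) :=
    Finset.sum_pos (fun k _ => mul_pos (hR k) (hφ.pos k)) ⟨i, Finset.mem_univ i⟩
  refine mul_right_cancel₀ hpair.ne' ?_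
  calc c * ∑ k, R k * φ (single k 1)
      = ∑ k, ∑ j, R j * (A.N i j k * φ (single k 1)) := by
        rw [Finset.mul_sum]
        refine Finset.sum_congr rfl fun k _ => ?_
        rw [← _root_.mul_assoc, ← hc k, Finset.sum_mul]
        simp only [_root_.mul_assoc]
    _ = ∑ j, R j * (φ (single i 1) * φ (single j 1)) := by
        rw [Finset.sum_comm]
        simp only [← Finset.mul_sum, hφ.sum_N_mul]
    _ = φ (single i 1) * ∑ k, R k * φ (single k 1) := by
        rw [Finset.mul_sum]
        exact Finset.sum_congr rfl fun j _ => by ring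

theorem sum_div_mul_N_eq (hφ : A.IsFPCharacter φ) {τ : ι → ι} {w : ι → ℝ}
    (hw : ∀ k, w k ≠ 0)
    (hrel : ∀ i j k, w k * A.N i j k = w j * A.N (τ i) k j) (i k : ι) :
    ∑ j, φ (single j 1) / w j * A.N i j k = φ (single (τ i) 1) * (φ (single k 1) / w k) := by
  have hterm : ∀ j,
      φ (single j 1) / w j * A.N i j k = A.N (τ i) k j * φ (single j 1) / w k := by
    intro j
    rw [div_mul_eq_mul_div, div_eq_div_iff (hw j) (hw k)]
    linear_combination φ (single j 1) * hrel i j k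
  rw [Finset.sum_congr rfl fun j _ => hterm j, ← Finset.sum_div, hφ.sum_N_mul, mul_div_assoc]

end IsFPCharacter

section Cyclic

variable {σ : ι → ι} {ε : ι → ℕ}

theorem weight_dual_mul_N_eq (hσ : Function.Involutive σ)
    (hcyc₁ : ∀ i j k, ε k * A.N i j (σ k) = ε j * A.N k i (σ j))
    (hrev : ∀ i j k, A.N i j (σ k) = A.N (σ j) (σ i) k) (i j k : ι) :
    ε (σ k) * A.N i j k = ε j * A.N (σ i) k j := by
  have h := hcyc₁ i j (σ k)
  rwa [hσ k, hrev, hσ k] at h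

theorem weight_mul_N_eq (hσ : Function.Involutive σ)
    (hcyc₁ : ∀ i j k, ε k * A.N i j (σ k) = ε j * A.N k i (σ j))
    (hcyc₂ : ∀ i j k, ε j * A.N k i (σ j) = ε i * A.N j k (σ i))
    (hrev : ∀ i j k, A.N i j (σ k) = A.N (σ j) (σ i) k) (i j k : ι) :
    ε k * A.N i j k = ε (σ j) * A.N (σ i) k j := by
  have h := hrev i j (σ k)
  rw [hσ k] at h
  rw [h, hcyc₁, hcyc₂, hσ j]

theorem weight_dual_eq_of_transitive (hA : A.Transitive)
    (h₁ : ∀ i j k, ε (σ k) * A.N i j k = ε j * A.N (σ i) k j)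
    (h₂ : ∀ i j k, ε k * A.N i j k = ε (σ j) * A.N (σ i) k j) (k : ι) :
    ε (σ k) = ε k := by
  obtain ⟨u, hu⟩ := hA.exists_N_pos k k
  have hsq : ε (σ k) * ε (σ k) * A.N u k k = ε k * ε k * A.N u k k := by
    calc ε (σ k) * ε (σ k) * A.N u k k
        = ε (σ k) * (ε k * A.N (σ u) k k) := by rw [_root_.mul_assoc, h₁]
      _ = ε k * (ε (σ k) * A.N (σ u) k k) := by ring
      _ = ε k * ε k * A.N u k k := by rw [← h₂, _root_.mul_assoc]
  exact Nat.mul_self_inj.mp (Nat.eq_of_mul_eq_mul_right hu hsq)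

end Cyclic

end NSetAlgebra

open NSetAlgebra in
theorem stmt0_general {ι : Type*} [Fintype ι]
    (A : NSetAlgebra ι) (hA : A.Transitive)
    (σ : ι → ι) (hσ : A.IsFusionSemiring σ)
    (φ : (ι →₀ ℕ) → ℝ) (hφ : A.IsFPCharacter φ)
    (ε : ι → ℕ) (hε : ∀ i, 1 ≤ ε i)
    (hcyc₁ : ∀ i j k : ι, ε k * A.N i j (σ k) = ε j * A.N k i (σ j))
    (hcyc₂ : ∀ i j k : ι, ε j * A.N k i (σ j) = ε i * A.N j k (σ i))
    (hrev : ∀ i j k : ι, A.N i j (σ k) = A.N (σ j) (σ i) k) :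
    (∀ k, 0 < φ (Finsupp.single k 1) / (ε k : ℝ)) ∧
    ∀ a : ι →₀ ℕ,
      A.starMul (toRealVec a) (fun k => φ (Finsupp.single k 1) / (ε k : ℝ))
        = φ a • (fun k => φ (Finsupp.single k 1) / (ε k : ℝ)) := by
  have hε₁ := weight_dual_mul_N_eq hσ.involutive hcyc₁ hrev
  have hεσ := weight_dual_eq_of_transitive hA hε₁
    (weight_mul_N_eq hσ.involutive hcyc₁ hcyc₂ hrev)
  have hrel : ∀ i j k, (ε k : ℝ) * A.N i j k = ε j * A.N (σ i) k j := fun i j k => by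
    exact_mod_cast hεσ k ▸ hε₁ i j k
  have hεpos : ∀ k, (0 : ℝ) < ε k := fun k => by exact_mod_cast hε k
  have hRpos : ∀ k, 0 < φ (single k 1) / (ε k : ℝ) := fun k => div_pos (hφ.pos k) (hεpos k)
  have heigen := hφ.sum_div_mul_N_eq (fun k => (hεpos k).ne') hrel
  refine ⟨hRpos, fun a => funext fun k => ?_⟩
  rw [starMul_toRealVec_apply, hφ.apply_eq_sum a, Pi.smul_apply, smul_eq_mul, Finset.sum_mul]
  refine Finset.sum_congr rfl fun i _ => ?_
  rw [heigen, ← hφ.eigenvalue_eq_of_pos hRpos (heigen i)]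
  ring

open NSetAlgebra in
/-- Theorem (New Regular element): in a transitive finite-rank fusion semiring,
the vector `R(k) = FPdim(e_k) / ε(k)` is a regular element, where `ε` satisfies the
relations of the cyclic permutation lemma. -/
theorem stmt0 {ι : Type*} [Fintype ι] [Nonempty ι]
    (A : NSetAlgebra ι) (hA : A.Transitive)
    (σ : ι → ι) (hσ : A.IsFusionSemiring σ)
    (φ : (ι →₀ ℕ) → ℝ) (hφ : A.IsFPCharacter φ)
    (ε : ι → ℕ) (hε : ∀ i, 1 ≤ ε i)
    (hcyc₁ : ∀ i j k : ι, ε k * A.N i j (σ k) = ε j * A.N k i (σ j))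
    (hcyc₂ : ∀ i j k : ι, ε j * A.N k i (σ j) = ε i * A.N j k (σ i))
    (hrev : ∀ i j k : ι, A.N i j (σ k) = A.N (σ j) (σ i) k) :
    (∀ k, 0 < φ (Finsupp.single k 1) / (ε k : ℝ)) ∧
    ∀ a : ι →₀ ℕ,
      A.starMul (toRealVec a) (fun k => φ (Finsupp.single k 1) / (ε k : ℝ))
        = φ a • (fun k => φ (Finsupp.single k 1) / (ε k : ℝ)) :=
  stmt0_general A hA σ hσ φ hφ ε hε hcyc₁ hcyc₂ hrev
end

section
/- Let A = ι →₀ ℕ and B = κ →₀ ℕ be transitive finite-rank ℕSet algebras with Frobenius–Perron characters φ_A and φ_B, and let f : (ι →₀ ℕ) → (κ →₀ ℕ) be an additive map that is dominant (for every x ∈ κ there exists a ∈ ι →₀ ℕ with e_x ≤ f(a)). Suppose there exists an element D ∈ ι →₀ ℕ such that f(a) * f(b) = f(a * D * b) for all a, b ∈ ι →₀ ℕ. Then: (1) φ_B(f(a)) = φ_A(D)·φ_A(a) for all a ∈ ι →₀ ℕ; and (2) for any regular elements R_A of A and R_B of B, the ℝ-linear extension f_ℝ of f satisfies f_ℝ(R_A)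 = φ_A(D)·(φ̂_A(R_A)/φ̂_B(R_B)) • R_B. -/
open Finsupp

/-!
Both parts are instances of the uniqueness half of Perron–Frobenius: a matrix with positive
entries has, up to scaling, at most one nonnegative nonzero eigenvector. With `s` the sum of the
simples of `A`, the vectors `(φ_A(e_i))_i` and `(φ_B(f e_i))_i` are eigenvectors of the matrix of
left multiplication by `s * D`, which is positive by transitivity (and `D ≠ 0`); the scalar is
fixed by `φ_B(f 1)² = φ_B(f D)`. Likewise `f_ℝ(R_A)` and `R_B` are eigenvectors of multiplication by
`f(s)`, positive by dominance, because `f(s) * f(a) = f(s * D * a)`; the scalar is read off by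
applying `φ̂_B` and using the first part.
-/

open Matrix

section AdditiveMaps

variable {ι κ M : Type*}

theorem map_zero_of_map_add [AddCommMonoid M] [IsCancelAdd M] {g : (ι →₀ ℕ) → M}
    (hg : ∀ a b, g (a + b) = g a + g b) : g 0 = 0 := by
  simpa using hg 0 0

theorem eq_sum_smul_of_map_add [Fintype ι] [AddCommMonoid M] [IsCancelAdd M] {g : (ι →₀ ℕ) → M}
    (hg : ∀ a b, g (a + b) = g a + g b) (a : ι →₀ ℕ) :
    g a = ∑ i, a i • g (single i 1) := by
  let G : (ι →₀ ℕ) →+ M := ⟨⟨g, map_zero_of_map_add hg⟩, hg⟩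
  calc g a = G (∑ i, a i • single i 1) := by simp [G, Finsupp.univ_sum_single]
    _ = ∑ i, a i • g (single i 1) := by
      rw [map_sum]
      exact Finset.sum_congr rfl fun i _ => map_nsmul G _ _

theorem apply_eq_sum_of_map_add [Fintype ι] {g : (ι →₀ ℕ) → (κ →₀ ℕ)}
    (hg : ∀ a b, g (a + b) = g a + g b) (a : ι →₀ ℕ) (x : κ) :
    g a x = ∑ i, a i * g (single i 1) x := by
  simp [eq_sum_smul_of_map_add hg a, Finsupp.finsetSum_apply]

theorem monotone_of_map_add [AddCommMonoid M] [PartialOrder M] [CanonicallyOrderedAdd M]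
    {g : (ι →₀ ℕ) → M} (hg : ∀ a b, g (a + b) = g a + g b) : Monotone g := by
  intro a b hab
  obtain ⟨c, rfl⟩ := exists_add_of_le hab
  rw [hg]
  exact le_self_add

theorem eq_dotProduct_of_map_add [Fintype ι] {φ : (ι →₀ ℕ) → ℝ} (hφ : ∀ a b, φ (a + b) = φ a + φ b)
    (a : ι →₀ ℕ) : φ a = toRealVec a ⬝ᵥ fun i => φ (single i 1) := by
  simp [eq_sum_smul_of_map_add hφ a, dotProduct, toRealVec, nsmul_eq_mul]

theorem single_one_le_iff {a : ι →₀ ℕ} {i : ι} : single i 1 ≤ a ↔ a i ≠ 0 :=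
  Finsupp.single_le_iff.trans Nat.one_le_iff_ne_zero

end AdditiveMaps

/-- Row `i` of `realMatrix g` is `g (e_i)`, so that `linExt g r = r ᵥ* realMatrix g`. -/
noncomputable def realMatrix {ι κ : Type*} (g : (ι →₀ ℕ) → (κ →₀ ℕ)) : Matrix ι κ ℝ :=
  Matrix.of fun i x => (g (single i 1) x : ℝ)

section RealMatrix

variable {ι κ ν : Type*}

theorem linExt_eq_vecMul [Fintype ι] (g : (ι →₀ ℕ) → (κ →₀ ℕ)) (r : ι → ℝ) :
    linExt g r = r ᵥ* realMatrix g :=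
  rfl

theorem toRealVec_map_of_map_add [Fintype ι] {g : (ι →₀ ℕ) → (κ →₀ ℕ)}
    (hg : ∀ a b, g (a + b) = g a + g b) (a : ι →₀ ℕ) :
    toRealVec (g a) = toRealVec a ᵥ* realMatrix g := by
  ext x
  simp [toRealVec, vecMul, dotProduct, realMatrix, apply_eq_sum_of_map_add hg a x]

theorem realMatrix_comp [Fintype κ] {g : (κ →₀ ℕ) → (ν →₀ ℕ)}
    (hg : ∀ a b, g (a + b) = g a + g b) (h : (ι →₀ ℕ) → (κ →₀ ℕ)) :
    realMatrix (g ∘ h) = realMatrix h * realMatrix g := by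
  ext i y
  exact congrFun (toRealVec_map_of_map_add hg (h (single i 1))) y

theorem realMatrix_mulVec [Fintype κ] (g : (ι →₀ ℕ) → (κ →₀ ℕ)) {φ : (κ →₀ ℕ) → ℝ}
    (hφ : ∀ a b, φ (a + b) = φ a + φ b) :
    (realMatrix g *ᵥ fun x => φ (single x 1)) = fun i => φ (g (single i 1)) := by
  ext i
  exact (eq_dotProduct_of_map_add hφ _).symm

theorem linExt_dotProduct [Fintype ι] [Fintype κ] (g : (ι →₀ ℕ) → (κ →₀ ℕ)) {φ : (κ →₀ ℕ) → ℝ}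
    (hφ : ∀ a b, φ (a + b) = φ a + φ b) (r : ι → ℝ) :
    (linExt g r ⬝ᵥ fun x => φ (single x 1)) = r ⬝ᵥ fun i => φ (g (single i 1)) := by
  rw [linExt_eq_vecMul, ← dotProduct_mulVec, realMatrix_mulVec g hφ]

end RealMatrix

namespace NSetAlgebra

variable {ι : Type*} (A : NSetAlgebra ι)

theorem starMul_toRealVec [Fintype ι] (b : ι →₀ ℕ) (s : ι → ℝ) :
    A.starMul (toRealVec b) s = s ᵥ* realMatrix (A.mul b) := by
  ext k
  simp only [starMul, N, toRealVec, vecMul, dotProduct, realMatrix, of_apply]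
  rw [Finset.sum_comm]
  refine Finset.sum_congr rfl fun j _ => ?_
  rw [apply_eq_sum_of_map_add (g := (A.mul · (single j 1))) (A.right_distrib · · _) b k]
  push_cast
  rw [Finset.mul_sum]
  exact Finset.sum_congr rfl fun i _ => by ring

theorem Transitive.mul_apply_ne_zero {A : NSetAlgebra ι} (hA : A.Transitive) {b c : ι →₀ ℕ}
    (hb : ∀ k, b k ≠ 0) (hc : c ≠ 0) (k : ι) : A.mul b c k ≠ 0 := by
  obtain ⟨m, hm⟩ := Finsupp.ne_iff.mp hc
  obtain ⟨u, hu⟩ := (hA m k).1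
  refine single_one_le_iff.mp (hu.trans ?_)
  calc A.mul (single u 1) (single m 1)
      ≤ A.mul b (single m 1) := monotone_of_map_add (g := (A.mul · (single m 1)))
        (A.right_distrib · · _) (single_one_le_iff.mpr (hb u))
    _ ≤ A.mul b c := monotone_of_map_add (g := A.mul b) (A.left_distrib b)
        (single_one_le_iff.mpr hm)

theorem Transitive.realMatrix_mul_pos {A : NSetAlgebra ι} (hA : A.Transitive) {b : ι →₀ ℕ}
    (hb : ∀ k, b k ≠ 0) (i k : ι) : 0 < realMatrix (A.mul b) i k := by
  simpa [realMatrix, Nat.pos_iff_ne_zero] using hA.mul_apply_ne_zero hb (by simp) k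

end NSetAlgebra

namespace Matrix

variable {n : Type*} [Fintype n] {M : Matrix n n ℝ} {v w : n → ℝ} {μ ν : ℝ}

theorem pos_of_mulVec_eq_smul (hM : ∀ i j, 0 < M i j) (hw : 0 ≤ w) (hw0 : w ≠ 0)
    (hMw : M *ᵥ w = ν • w) (i : n) : 0 < w i := by
  obtain ⟨j, hj⟩ := Function.ne_iff.mp hw0
  have hMwi : 0 < (M *ᵥ w) i :=
    Finset.sum_pos' (fun k _ => mul_nonneg (hM i k).le (hw k))
      ⟨j, Finset.mem_univ j, mul_pos (hM i j) (lt_of_le_of_ne (hw j) (Ne.symm hj))⟩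
  refine lt_of_le_of_ne (hw i) fun hwi => ?_
  simp [hMw, ← hwi] at hMwi

theorem exists_smul_le_of_pos [Nonempty n] (hv : ∀ i, 0 < v i) (hw : ∀ i, 0 < w i) :
    ∃ t, 0 < t ∧ t • v ≤ w ∧ ∃ j, t * v j = w j := by
  obtain ⟨j, -, hj⟩ := Finset.exists_min_image Finset.univ (fun j => w j / v j)
    Finset.univ_nonempty
  refine ⟨w j / v j, div_pos (hw j) (hv j), fun k => ?_, j, div_mul_cancel₀ _ (hv j).ne'⟩
  have := hj k (Finset.mem_univ k)
  rwa [le_div_iff₀ (hv k)] at this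

theorem le_of_mulVec_eq_smul [Nonempty n] (hM : ∀ i j, 0 ≤ M i j) (hv : ∀ i, 0 < v i)
    (hw : ∀ i, 0 < w i) (hMv : M *ᵥ v = μ • v) (hMw : M *ᵥ w = ν • w) : μ ≤ ν := by
  obtain ⟨t, -, hle, j, hj⟩ := exists_smul_le_of_pos hv hw
  have hmono : (M *ᵥ (t • v)) j ≤ (M *ᵥ w) j :=
    Finset.sum_le_sum fun k _ => mul_le_mul_of_nonneg_left (hle k) (hM j k)
  rw [mulVec_smul, hMv, hMw] at hmono
  simp only [Pi.smul_apply, smul_eq_mul] at hmono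
  rw [mul_left_comm, hj] at hmono
  exact le_of_mul_le_mul_right hmono (hw j)

/-- Uniqueness part of the Perron–Frobenius theorem. -/
theorem exists_pos_smul_eq_of_mulVec_eq_smul (hM : ∀ i j, 0 < M i j) (hv : ∀ i, 0 < v i)
    (hw : 0 ≤ w) (hw0 : w ≠ 0) (hMv : M *ᵥ v = μ • v) (hMw : M *ᵥ w = ν • w) :
    ∃ t : ℝ, 0 < t ∧ w = t • v := by
  have hw' := pos_of_mulVec_eq_smul hM hw hw0 hMw
  obtain ⟨j₀, -⟩ := Function.ne_iff.mp hw0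
  have : Nonempty n := ⟨j₀⟩
  have hM' : ∀ i j, 0 ≤ M i j := fun i j => (hM i j).le
  have hμν : μ = ν := le_antisymm (le_of_mulVec_eq_smul hM' hv hw' hMv hMw)
    (le_of_mulVec_eq_smul hM' hw' hv hMw hMv)
  obtain ⟨t, ht, hle, j, hj⟩ := exists_smul_le_of_pos hv hw'
  refine ⟨t, ht, (sub_eq_zero.mp ?_)⟩
  -- `w - t • v` is a nonnegative eigenvector vanishing at `j`, so it cannot be nonzero.
  by_contra hne
  have hMu : M *ᵥ (w - t • v) = μ • (w - t • v) := by
    rw [mulVec_sub, mulVec_smul, hMv, hMw, hμν, smul_sub, smul_comm]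
  have := pos_of_mulVec_eq_smul hM (sub_nonneg.mpr hle) hne hMu j
  simp [hj] at this

end Matrix

namespace NSetAlgebra

variable {ι : Type*} [Fintype ι] {A : NSetAlgebra ι} {φ : (ι →₀ ℕ) → ℝ}

theorem IsFPCharacter.nonneg (hφ : A.IsFPCharacter φ) (a : ι →₀ ℕ) : 0 ≤ φ a := by
  rw [eq_dotProduct_of_map_add hφ.map_add]
  exact Finset.sum_nonneg fun i _ => mul_nonneg (Nat.cast_nonneg _) (hφ.pos i).le

theorem IsFPCharacter.pos_of_ne_zero (hφ : A.IsFPCharacter φ) {a : ι →₀ ℕ} (ha : a ≠ 0) :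
    0 < φ a := by
  obtain ⟨i, hi⟩ := Finsupp.ne_iff.mp ha
  rw [eq_dotProduct_of_map_add hφ.map_add]
  exact Finset.sum_pos' (fun j _ => mul_nonneg (Nat.cast_nonneg _) (hφ.pos j).le)
    ⟨i, Finset.mem_univ i, mul_pos (by simpa [toRealVec, Nat.pos_iff_ne_zero] using hi) (hφ.pos i)⟩

theorem IsFPCharacter.exists_eq_mul_of_map_mul_eq (hA : A.Transitive) (hφ : A.IsFPCharacter φ)
    {ψ : (ι →₀ ℕ) → ℝ} (hψ : ∀ a b, ψ (a + b) = ψ a + ψ b) (hψ0 : ∀ i, 0 ≤ ψ (single i 1))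
    (hψ1 : ∃ i, ψ (single i 1) ≠ 0) {c : ι →₀ ℕ} (hc : ∀ k, c k ≠ 0) {μ : ℝ}
    (hψc : ∀ a, ψ (A.mul c a) = μ * ψ a) : ∃ t, 0 < t ∧ ∀ a, ψ a = t * φ a := by
  have hMφ : (realMatrix (A.mul c) *ᵥ fun i => φ (single i 1)) = φ c • fun i => φ (single i 1) := by
    rw [realMatrix_mulVec _ hφ.map_add]
    ext j
    simp [hφ.map_mul]
  have hMψ : (realMatrix (A.mul c) *ᵥ fun i => ψ (single i 1)) = μ • fun i => ψ (single i 1) := by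
    rw [realMatrix_mulVec _ hψ]
    ext j
    simp [hψc]
  obtain ⟨t, ht, hψφ⟩ := exists_pos_smul_eq_of_mulVec_eq_smul (hA.realMatrix_mul_pos hc) hφ.pos
    hψ0 (Function.ne_iff.mpr hψ1) hMφ hMψ
  refine ⟨t, ht, fun a => ?_⟩
  rw [eq_dotProduct_of_map_add hψ, eq_dotProduct_of_map_add hφ.map_add, hψφ, dotProduct_smul,
    smul_eq_mul]

theorem IsRegular.vecMul_realMatrix_mul (hφ : ∀ a b, φ (a + b) = φ a + φ b) {R : ι → ℝ}
    (hR : A.IsRegular φ R) (b : ι →₀ ℕ) : R ᵥ* realMatrix (A.mul b) = φ b • R := by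
  have hadd : ∀ a a', R ᵥ* realMatrix (A.mul (a + a')) =
      R ᵥ* realMatrix (A.mul a) + R ᵥ* realMatrix (A.mul a') := by
    intro a a'
    rw [← vecMul_add]
    congr 1
    ext i k
    simp [realMatrix, A.right_distrib]
  rw [eq_sum_smul_of_map_add (g := fun b => R ᵥ* realMatrix (A.mul b)) hadd b,
    eq_sum_smul_of_map_add hφ b, Finset.sum_smul]
  refine Finset.sum_congr rfl fun i _ => ?_
  rw [← starMul_toRealVec, smul_assoc]
  exact congrArg _ (hR.2 i)

theorem IsRegular.exists_eq_smul (hA : A.Transitive) (hφ : ∀ a b, φ (a + b) = φ a + φ b)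
    {R : ι → ℝ} (hR : A.IsRegular φ R) {c : ι →₀ ℕ} (hc : ∀ k, c k ≠ 0) {r : ι → ℝ}
    (hr : 0 ≤ r) (hr0 : r ≠ 0) {μ : ℝ} (hrc : r ᵥ* realMatrix (A.mul c) = μ • r) :
    ∃ t : ℝ, r = t • R := by
  obtain ⟨t, -, ht⟩ := exists_pos_smul_eq_of_mulVec_eq_smul (M := (realMatrix (A.mul c))ᵀ)
    (fun i k => hA.realMatrix_mul_pos hc k i) hR.1 hr hr0
    (by rw [mulVec_transpose, hR.vecMul_realMatrix_mul hφ]) (by rw [mulVec_transpose, hrc])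
  exact ⟨t, ht⟩

end NSetAlgebra

section Dominant

open NSetAlgebra

variable {ι κ : Type*} {A : NSetAlgebra ι} {B : NSetAlgebra κ} {f : (ι →₀ ℕ) → (κ →₀ ℕ)}
  {D : ι →₀ ℕ} {φA : (ι →₀ ℕ) → ℝ} {φB : (κ →₀ ℕ) → ℝ}

theorem exists_apply_single_ne_zero_of_dominant [Fintype ι] (hadd : ∀ a b, f (a + b) = f a + f b)
    (hdom : ∀ x : κ, ∃ a, single x 1 ≤ f a) (x : κ) : ∃ i, f (single i 1) x ≠ 0 := by
  obtain ⟨a, ha⟩ := hdom x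
  have hsum : ∑ i, a i * f (single i 1) x ≠ 0 := by
    rw [← apply_eq_sum_of_map_add hadd]
    exact single_one_le_iff.mp ha
  obtain ⟨i, -, hi⟩ := Finset.exists_ne_zero_of_sum_ne_zero hsum
  exact ⟨i, right_ne_zero_of_mul hi⟩

theorem apply_sum_single_ne_zero_of_dominant [Fintype ι] (hadd : ∀ a b, f (a + b) = f a + f b)
    (hdom : ∀ x : κ, ∃ a, single x 1 ≤ f a) (x : κ) : f (∑ i, single i 1) x ≠ 0 := by
  obtain ⟨i, hi⟩ := exists_apply_single_ne_zero_of_dominant hadd hdom x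
  rw [apply_eq_sum_of_map_add hadd]
  refine fun h => hi ?_
  simpa [Finsupp.finsetSum_apply] using Finset.sum_eq_zero_iff.mp h i (Finset.mem_univ i)

theorem realMatrix_mul_realMatrix_mul_map [Fintype ι] [Fintype κ]
    (hadd : ∀ a b, f (a + b) = f a + f b)
    (hD : ∀ a b, B.mul (f a) (f b) = f (A.mul (A.mul a D) b)) (c : ι →₀ ℕ) :
    realMatrix f * realMatrix (B.mul (f c)) = realMatrix (A.mul (A.mul c D)) * realMatrix f := by
  rw [← realMatrix_comp (B.left_distrib (f c)), ← realMatrix_comp hadd]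
  exact congrArg realMatrix (funext (hD c))

variable [Fintype κ] [Nonempty κ]

theorem ne_zero_of_map_mul_map (hφB : B.IsFPCharacter φB) (hadd : ∀ a b, f (a + b) = f a + f b)
    (hdom : ∀ x : κ, ∃ a, single x 1 ≤ f a)
    (hD : ∀ a b, B.mul (f a) (f b) = f (A.mul (A.mul a D) b)) : D ≠ 0 := by
  rintro rfl
  obtain ⟨x⟩ := ‹Nonempty κ›
  obtain ⟨a, ha⟩ := hdom x
  have hfa : f a ≠ 0 := fun h => by simp [h] at ha
  have h := hφB.map_mul (f a) (f a)
  rw [hD, A.mul_zero, A.zero_mul, map_zero_of_map_add hadd, map_zero_of_map_add hφB.map_add] at h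
  exact (mul_self_pos.mpr (hφB.pos_of_ne_zero hfa).ne').ne h

theorem fpDim_map_eq_mul [Fintype ι] (hA : A.Transitive) (hφA : A.IsFPCharacter φA)
    (hφB : B.IsFPCharacter φB) (hadd : ∀ a b, f (a + b) = f a + f b)
    (hdom : ∀ x : κ, ∃ a, single x 1 ≤ f a)
    (hD : ∀ a b, B.mul (f a) (f b) = f (A.mul (A.mul a D) b)) (a : ι →₀ ℕ) :
    φB (f a) = φA D * φA a := by
  obtain ⟨x⟩ := ‹Nonempty κ›
  obtain ⟨i, hi⟩ := exists_apply_single_ne_zero_of_dominant hadd hdom x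
  have hfi : f (single i 1) ≠ 0 := fun h => hi (by simp [h])
  have hsD : ∀ k, A.mul (∑ j, single j 1) D k ≠ 0 :=
    hA.mul_apply_ne_zero (fun k => by simp [Finsupp.finsetSum_apply])
      (ne_zero_of_map_mul_map hφB hadd hdom hD)
  obtain ⟨t, ht, hψ⟩ := hφA.exists_eq_mul_of_map_mul_eq hA (ψ := fun a => φB (f a))
    (fun a b => by rw [hadd, hφB.map_add]) (fun _ => hφB.nonneg _)
    ⟨i, (hφB.pos_of_ne_zero hfi).ne'⟩ hsD (fun b => by rw [← hD, hφB.map_mul])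
  -- `t` is pinned down by `f(1) * f(1) = f(D)`.
  have htD : t * φA D = t * t := by
    have h := hφB.map_mul (f A.one) (f A.one)
    rwa [hD, A.one_mul, A.mul_one, hψ, hψ, hφA.map_one, _root_.mul_one] at h
  rw [hψ, mul_left_cancel₀ ht.ne' htD]

theorem exists_linExt_eq_smul [Fintype ι] (hB : B.Transitive)
    (hφA : ∀ a b, φA (a + b) = φA a + φA b) (hφB : ∀ a b, φB (a + b) = φB a + φB b)
    (hadd : ∀ a b, f (a + b) = f a + f b)
    (hdom : ∀ x : κ, ∃ a, single x 1 ≤ f a)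
    (hD : ∀ a b, B.mul (f a) (f b) = f (A.mul (A.mul a D) b)) {RA : ι → ℝ} {RB : κ → ℝ}
    (hRA : A.IsRegular φA RA) (hRB : B.IsRegular φB RB) : ∃ u : ℝ, linExt f RA = u • RB := by
  have hr : ∀ x, 0 < linExt f RA x := fun x => by
    obtain ⟨i, hi⟩ := exists_apply_single_ne_zero_of_dominant hadd hdom x
    exact Finset.sum_pos' (fun j _ => mul_nonneg (hRA.1 j).le (Nat.cast_nonneg _))
      ⟨i, Finset.mem_univ i, mul_pos (hRA.1 i) (by simpa [Nat.pos_iff_ne_zero] using hi)⟩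
  obtain ⟨x₀⟩ := ‹Nonempty κ›
  refine hRB.exists_eq_smul hB hφB (apply_sum_single_ne_zero_of_dominant hadd hdom)
    (fun x => (hr x).le) (Function.ne_iff.mpr ⟨x₀, (hr x₀).ne'⟩)
    (μ := φA (A.mul (∑ i, single i 1) D)) ?_
  rw [linExt_eq_vecMul, vecMul_vecMul, realMatrix_mul_realMatrix_mul_map hadd hD, ← vecMul_vecMul,
    hRA.vecMul_realMatrix_mul hφA, smul_vecMul]

end Dominant

open NSetAlgebra in
theorem stmt1_general {ι κ : Type*} [Fintype ι] [Fintype κ] [Nonempty κ]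
    (A : NSetAlgebra ι) (B : NSetAlgebra κ) (hA : A.Transitive) (hB : B.Transitive)
    (φA : (ι →₀ ℕ) → ℝ) (φB : (κ →₀ ℕ) → ℝ)
    (hφA : A.IsFPCharacter φA) (hφB : B.IsFPCharacter φB)
    (f : (ι →₀ ℕ) → (κ →₀ ℕ))
    (hadd : ∀ a b, f (a + b) = f a + f b)
    (hdom : ∀ x : κ, ∃ a, Finsupp.single x 1 ≤ f a)
    (D : ι →₀ ℕ)
    (hD : ∀ a b, B.mul (f a) (f b) = f (A.mul (A.mul a D) b)) :
    (∀ a, φB (f a) = φA D * φA a) ∧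
    (∀ RA RB, A.IsRegular φA RA → B.IsRegular φB RB →
      linExt f RA =
        (φA D * ((∑ i : ι, RA i * φA (Finsupp.single i 1)) /
          (∑ x : κ, RB x * φB (Finsupp.single x 1)))) • RB) := by
  have hmap := fpDim_map_eq_mul hA hφA hφB hadd hdom hD
  refine ⟨hmap, fun RA RB hRA hRB => ?_⟩
  obtain ⟨u, hu⟩ := exists_linExt_eq_smul hB hφA.map_add hφB.map_add hadd hdom hD hRA hRB
  have hRB0 : 0 < RB ⬝ᵥ fun x => φB (single x 1) :=
    Finset.sum_pos (fun x _ => mul_pos (hRB.1 x) (hφB.pos x)) Finset.univ_nonempty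
  have hdim : u * (RB ⬝ᵥ fun x => φB (single x 1)) = φA D * (RA ⬝ᵥ fun i => φA (single i 1)) := by
    rw [← smul_eq_mul, ← smul_dotProduct, ← hu, linExt_dotProduct f hφB.map_add, ← smul_eq_mul,
      ← dotProduct_smul]
    simp only [hmap]
    rfl
  rw [hu, ← mul_div_assoc]
  exact congrArg (· • RB) ((eq_div_iff hRB0.ne').mpr hdim)

open NSetAlgebra in
/-- If `f : A → B` is additive and dominant and there is `D` with
`f(a) * f(b) = f(a * D * b)`, then `φ_B(f(a)) = φ_A(D)·φ_A(a)` and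
`f_ℝ(R_A) = φ_A(D)·(φ̂_A(R_A)/φ̂_B(R_B)) • R_B`. -/
theorem stmt1 {ι κ : Type*} [Fintype ι] [Nonempty ι] [Fintype κ] [Nonempty κ]
    (A : NSetAlgebra ι) (B : NSetAlgebra κ) (hA : A.Transitive) (hB : B.Transitive)
    (φA : (ι →₀ ℕ) → ℝ) (φB : (κ →₀ ℕ) → ℝ)
    (hφA : A.IsFPCharacter φA) (hφB : B.IsFPCharacter φB)
    (f : (ι →₀ ℕ) → (κ →₀ ℕ))
    (hadd : ∀ a b, f (a + b) = f a + f b)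
    (hdom : ∀ x : κ, ∃ a, Finsupp.single x 1 ≤ f a)
    (D : ι →₀ ℕ)
    (hD : ∀ a b, B.mul (f a) (f b) = f (A.mul (A.mul a D) b)) :
    (∀ a, φB (f a) = φA D * φA a) ∧
    (∀ RA RB, A.IsRegular φA RA → B.IsRegular φB RB →
      linExt f RA =
        (φA D * ((∑ i : ι, RA i * φA (Finsupp.single i 1)) /
          (∑ x : κ, RB x * φB (Finsupp.single x 1)))) • RB) :=
  stmt1_general A B hA hB φA φB hφA hφB f hadd hdom D hD
end

section
/- Let C be a monoidal category. For every object (Z, β) of the Drinfeld center Z(C), the underlying object Z is Galois trivial: for every endomorphism e : 𝟙 ⟶ 𝟙 of the monoidal unit, λ_Z(e) = ρ_Z(e). In particular, every object in the image of the forgetful functor Z(C) → C is Galois trivial. -/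
open CategoryTheory MonoidalCategory

variable {C : Type*} [Category C] [MonoidalCategory C]

/-- The left embedding `λ_X : End(𝟙) → End(X)`,
`e ↦ ℓ_X ∘ (e ⊗ id_X) ∘ ℓ_X⁻¹`. -/
def leftEmbed (X : C) (e : 𝟙_ C ⟶ 𝟙_ C) : X ⟶ X :=
  (λ_ X).inv ≫ (e ▷ X) ≫ (λ_ X).hom

/-- The right embedding `ρ_X : End(𝟙) → End(X)`,
`e ↦ r_X ∘ (id_X ⊗ e) ∘ r_X⁻¹`. -/
def rightEmbed (X : C) (e : 𝟙_ C ⟶ 𝟙_ C) : X ⟶ X :=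
  (ρ_ X).inv ≫ (X ◁ e) ≫ (ρ_ X).hom

/-- `X` is Galois trivial if the left and right embeddings agree on it. -/
def GaloisTrivial (X : C) : Prop :=
  ∀ e : 𝟙_ C ⟶ 𝟙_ C, leftEmbed X e = rightEmbed X e

namespace CategoryTheory.HalfBraiding

-- `Center C` is braided with braiding `b.β`, so `braiding_leftUnitor` there computes `b.β 𝟙`.
theorem β_tensorUnit_hom {X : C} (b : HalfBraiding X) :
    (b.β (𝟙_ C)).hom = (ρ_ X).hom ≫ (λ_ X).inv :=
  (Iso.eq_comp_inv _).2 <| congrArg Center.Hom.f <| braiding_leftUnitor (show Center C from ⟨X, b⟩)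

theorem galoisTrivial {X : C} (b : HalfBraiding X) : GaloisTrivial X := by
  intro e
  have h := b.naturality e
  rw [b.β_tensorUnit_hom] at h
  rw [leftEmbed, rightEmbed, ← cancel_epi (ρ_ X).hom, ← cancel_mono (λ_ X).inv]
  simpa using h.symm

end CategoryTheory.HalfBraiding

/-- Every object in the image of the forgetful functor `Z(C) → C` is Galois trivial:
for every object `(Z, β)` of the Drinfeld center and every `e : 𝟙 ⟶ 𝟙`,
`λ_Z(e) = ρ_Z(e)`. -/
theorem stmt3 (Z : CategoryTheory.Center C) : GaloisTrivial Z.1 :=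
  Z.2.galoisTrivial
end

section
/- Let C be a monoidal category, let (Z, β) be an object of the Drinfeld center Z(C), and let X be a retract of Z in C, i.e., there exist morphisms i : X ⟶ Z and p : Z ⟶ X with i ≫ p = id_X. Then X is Galois trivial. Consequently, a Galois nontrivial object X cannot be a retract of the underlying object of any object of the Drinfeld center. (In the paper C is a fusion category, where every monomorphism splits, so this says that the underlying object of an object of Z(C) cannot have a Galois nontrivial subobject.) -/
/-!
Both embeddings `λ_X, ρ_X : End(𝟙) → End(X)` are natural in `X`, so Galois triviality passes
to retracts. A half-braiding `β` on `Z` is forced to be `ρ_Z ≫ λ_Z⁻¹` at the unit, and then its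
naturality with respect to `e : 𝟙 ⟶ 𝟙` says precisely `λ_Z(e) = ρ_Z(e)`.
-/

open CategoryTheory MonoidalCategory

variable {C : Type*} [Category C] [MonoidalCategory C]

lemma leftEmbed_naturality {X Y : C} (f : X ⟶ Y) (e : 𝟙_ C ⟶ 𝟙_ C) :
    f ≫ leftEmbed Y e = leftEmbed X e ≫ f := by
  simp only [leftEmbed]
  rw [leftUnitor_inv_naturality_assoc, whisker_exchange_assoc, leftUnitor_naturality]
  simp only [Category.assoc]

lemma rightEmbed_naturality {X Y : C} (f : X ⟶ Y) (e : 𝟙_ C ⟶ 𝟙_ C) :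
    f ≫ rightEmbed Y e = rightEmbed X e ≫ f := by
  simp only [rightEmbed]
  rw [rightUnitor_inv_naturality_assoc, ← whisker_exchange_assoc, rightUnitor_naturality]
  simp only [Category.assoc]

lemma GaloisTrivial.of_retract {X Y : C} (h : Retract X Y) (hY : GaloisTrivial Y) :
    GaloisTrivial X := fun e =>
  calc leftEmbed X e = h.i ≫ leftEmbed Y e ≫ h.r := by
        rw [← Category.assoc, leftEmbed_naturality, Category.assoc, h.retract, Category.comp_id]
    _ = h.i ≫ rightEmbed Y e ≫ h.r := by rw [hY e]
    _ = rightEmbed X e := by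
        rw [← Category.assoc, rightEmbed_naturality, Category.assoc, h.retract, Category.comp_id]

lemma CategoryTheory.HalfBraiding.β_tensorUnit_hom_s4 {X : C} (b : HalfBraiding X) :
    (b.β (𝟙_ C)).hom = (ρ_ X).hom ≫ (λ_ X).inv := by
  let Z : Center C := ⟨X, b⟩
  have h := congrArg Center.Hom.f (braiding_tensorUnit_right Z)
  rwa [show β_ Z (𝟙_ (Center C)) = Z.braiding (𝟙_ (Center C)) from rfl, Center.braiding_hom_f,
    Center.comp_f, Center.rightUnitor_hom_f, Center.leftUnitor_inv_f] at h

lemma CategoryTheory.HalfBraiding.galoisTrivial_s4 {X : C} (b : HalfBraiding X) : GaloisTrivial X := by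
  intro e
  have h := b.naturality e
  rw [b.β_tensorUnit_hom_s4] at h
  calc leftEmbed X e = (ρ_ X).inv ≫ ((ρ_ X).hom ≫ (λ_ X).inv ≫ e ▷ X) ≫ (λ_ X).hom := by
        simp [leftEmbed]
    _ = rightEmbed X e := by rw [← Category.assoc (ρ_ X).hom, ← h]; simp [rightEmbed]

/-- A retract in `C` of the underlying object of an object of the Drinfeld center
is Galois trivial; equivalently, a Galois nontrivial object cannot be a retract
(in particular, in a fusion category, a subobject) of the underlying object of an
object of `Z(C)`. -/
theorem stmt4 (Z : CategoryTheory.Center C) (X : C)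
    (i : X ⟶ Z.1) (p : Z.1 ⟶ X) (hip : i ≫ p = 𝟙 X) : GaloisTrivial X :=
  GaloisTrivial.of_retract ⟨i, p, hip⟩ Z.2.galoisTrivial_s4
end

section
/- Let A = ι →₀ ℕ be an ℕSet algebra. If i, j ∈ ι satisfy e_i ≤ 1 and e_j ≤ 1, then e_i * e_j = e_i when i = j and e_i * e_j = 0 when i ≠ j. Furthermore, 1 = Σ_{i ∈ O_0} e_i, where O_0 = { i ∈ ι | e_i ≤ 1 }; equivalently, every coefficient of the unit 1 is either 0 or 1. -/
open Finsupp

/-!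
Write `u = 1 = ∑ₖ u(k) e_k`. For any simple `e_i`, the identity
`e_i = e_i * u = ∑ₖ u(k) (e_i * e_k)` expresses an atom of `ι →₀ ℕ` as a sum of natural multiples,
so exactly one `j` with `u(j) = 1` contributes, with `e_i * e_j = e_i`, and `e_i * e_k = 0` for the
other `k` in the support of `u`; symmetrically on the left. If `i` itself lies in the support of `u`,
the left unit of `e_j` must be `i` (as `e_i * e_j = e_i ≠ 0`), whence `e_j = e_i * e_j = e_i`:
the right unit of `e_i` is `e_i`.
-/

namespace Finsupp

variable {α ι : Type*} {i : ι}

theorem single_one_le_iff_mem_support {f : ι →₀ ℕ} : single i 1 ≤ f ↔ i ∈ f.support := by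
  rw [single_le_iff, Nat.one_le_iff_ne_zero, mem_support_iff]

theorem sum_support_nsmul_single_one (f : ι →₀ ℕ) : ∑ k ∈ f.support, f k • single k 1 = f := by
  conv_rhs => rw [← sum_single f]
  exact Finset.sum_congr rfl fun k _ => smul_single_one k (f k)

theorem add_eq_single_one {x y : ι →₀ ℕ} (h : x + y = single i 1) :
    x = single i 1 ∧ y = 0 ∨ x = 0 ∧ y = single i 1 := by
  have hdeg : x.degree + y.degree = 1 := by
    simpa only [map_add, degree_single] using congrArg degree h
  rcases Nat.add_eq_one_iff.mp hdeg with ⟨hx, -⟩ | ⟨-, hy⟩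
  · rw [(degree_eq_zero_iff x).mp hx, zero_add] at h
    exact Or.inr ⟨(degree_eq_zero_iff x).mp hx, h⟩
  · rw [(degree_eq_zero_iff y).mp hy, add_zero] at h
    exact Or.inl ⟨h, (degree_eq_zero_iff y).mp hy⟩

theorem exists_eq_single_of_sum_eq_single {s : Finset α} {f : α → ι →₀ ℕ}
    (h : ∑ a ∈ s, f a = single i 1) :
    ∃ a ∈ s, f a = single i 1 ∧ ∀ b ∈ s, b ≠ a → f b = 0 := by
  classical
  induction s using Finset.induction_on with
  | empty => exact absurd h.symm (single_ne_zero.mpr one_ne_zero)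
  | insert a s ha ih =>
    rw [Finset.sum_insert ha] at h
    rcases add_eq_single_one h with ⟨hfa, hs⟩ | ⟨hfa, hs⟩
    · refine ⟨a, Finset.mem_insert_self a s, hfa, fun b hb hba => ?_⟩
      exact Finset.sum_eq_zero_iff.mp hs b ((Finset.mem_insert.mp hb).resolve_left hba)
    · obtain ⟨c, hc, hfc, hzero⟩ := ih hs
      refine ⟨c, Finset.mem_insert_of_mem hc, hfc, fun b hb hbc => ?_⟩
      rcases Finset.mem_insert.mp hb with rfl | hb
      · exact hfa
      · exact hzero b hb hbc

theorem exists_eq_single_of_sum_nsmul_eq_single {s : Finset α} {n : α → ℕ}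
    {g : α → ι →₀ ℕ} (hn : ∀ a ∈ s, n a ≠ 0) (h : ∑ a ∈ s, n a • g a = single i 1) :
    ∃ a ∈ s, n a = 1 ∧ g a = single i 1 ∧ ∀ b ∈ s, b ≠ a → g b = 0 := by
  obtain ⟨a, ha, hga, hzero⟩ := exists_eq_single_of_sum_eq_single h
  have hna : n a = 1 := by
    refine Nat.eq_one_of_mul_eq_one_right (n := (g a).degree) ?_
    simpa only [map_nsmul, degree_single, smul_eq_mul] using congrArg degree hga
  rw [hna, one_smul] at hga
  exact ⟨a, ha, hna, hga, fun b hb hba => (smul_eq_zero.mp (hzero b hb hba)).resolve_left (hn b hb)⟩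

end Finsupp

namespace NSetAlgebra

variable {ι : Type*} (A : NSetAlgebra ι)

def mulLeft (a : ι →₀ ℕ) : (ι →₀ ℕ) →+ (ι →₀ ℕ) where
  toFun := A.mul a
  map_zero' := A.mul_zero a
  map_add' := A.left_distrib a

def mulRight (b : ι →₀ ℕ) : (ι →₀ ℕ) →+ (ι →₀ ℕ) where
  toFun a := A.mul a b
  map_zero' := A.zero_mul b
  map_add' a a' := A.right_distrib a a' b

theorem sum_one_nsmul_single_mul_single (i : ι) :
    ∑ k ∈ A.one.support, A.one k • A.mul (single i 1) (single k 1) = single i 1 := by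
  calc ∑ k ∈ A.one.support, A.one k • A.mul (single i 1) (single k 1)
      = A.mulLeft (single i 1) (∑ k ∈ A.one.support, A.one k • single k 1) := by
        simp only [map_sum, map_nsmul]
        rfl
    _ = single i 1 := by rw [sum_support_nsmul_single_one]; exact A.mul_one _

theorem sum_one_nsmul_mul_single_single (j : ι) :
    ∑ k ∈ A.one.support, A.one k • A.mul (single k 1) (single j 1) = single j 1 := by
  calc ∑ k ∈ A.one.support, A.one k • A.mul (single k 1) (single j 1)
      = A.mulRight (single j 1) (∑ k ∈ A.one.support, A.one k • single k 1) := by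
        simp only [map_sum, map_nsmul]
        rfl
    _ = single j 1 := by rw [sum_support_nsmul_single_one]; exact A.one_mul _

theorem exists_right_unit (i : ι) :
    ∃ j ∈ A.one.support, A.one j = 1 ∧ A.mul (single i 1) (single j 1) = single i 1 ∧
      ∀ k ∈ A.one.support, k ≠ j → A.mul (single i 1) (single k 1) = 0 :=
  exists_eq_single_of_sum_nsmul_eq_single (fun _ => mem_support_iff.mp)
    (A.sum_one_nsmul_single_mul_single i)

theorem exists_left_unit (j : ι) :
    ∃ i ∈ A.one.support, A.one i = 1 ∧ A.mul (single i 1) (single j 1) = single j 1 ∧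
      ∀ k ∈ A.one.support, k ≠ i → A.mul (single k 1) (single j 1) = 0 :=
  exists_eq_single_of_sum_nsmul_eq_single (fun _ => mem_support_iff.mp)
    (A.sum_one_nsmul_mul_single_single j)

theorem eq_of_mul_single_eq_self {i j : ι} (hi : i ∈ A.one.support)
    (hij : A.mul (single i 1) (single j 1) = single i 1) : i = j := by
  obtain ⟨i', -, -, hi'j, hzero⟩ := A.exists_left_unit j
  have hii' : i = i' := by
    by_contra hne
    exact single_ne_zero.mpr one_ne_zero (hij.symm.trans (hzero i hi hne))
  subst hii'
  exact single_left_injective one_ne_zero (hij.symm.trans hi'j)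

theorem one_apply_eq_one_and_single_mul_single {i : ι} (hi : i ∈ A.one.support) :
    A.one i = 1 ∧ A.mul (single i 1) (single i 1) = single i 1 ∧
      ∀ k ∈ A.one.support, k ≠ i → A.mul (single i 1) (single k 1) = 0 := by
  obtain ⟨j, -, hj, hij, hzero⟩ := A.exists_right_unit i
  obtain rfl := A.eq_of_mul_single_eq_self hi hij
  exact ⟨hj, hij, hzero⟩

end NSetAlgebra

open NSetAlgebra in
/-- In an ℕSet algebra, the simple summands of `1` are orthogonal idempotents:
`e_i * e_j = e_i` if `i = j` and `0` otherwise, for `e_i, e_j ≤ 1`.  Moreover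
`1 = Σ_{i ∈ O₀} e_i`; equivalently, every coefficient of `1` is `0` or `1`. -/
theorem stmt6 {ι : Type*} (A : NSetAlgebra ι) :
    (∀ i j : ι, Finsupp.single i 1 ≤ A.one → Finsupp.single j 1 ≤ A.one →
      (i = j → A.mul (Finsupp.single i 1) (Finsupp.single j 1) = Finsupp.single i 1) ∧
      (i ≠ j → A.mul (Finsupp.single i 1) (Finsupp.single j 1) = 0)) ∧
    (A.one = ∑ k ∈ A.one.support, Finsupp.single k 1) ∧
    (∀ k : ι, A.one k = 0 ∨ A.one k = 1) := by
  refine ⟨fun i j hi hj => ?_, ?_, fun k => ?_⟩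
  · rw [single_one_le_iff_mem_support] at hi hj
    obtain ⟨-, hii, horth⟩ := A.one_apply_eq_one_and_single_mul_single hi
    exact ⟨by rintro rfl; exact hii, fun hij => horth j hj (Ne.symm hij)⟩
  · conv_lhs => rw [← sum_support_nsmul_single_one A.one]
    exact Finset.sum_congr rfl fun k hk => by
      rw [(A.one_apply_eq_one_and_single_mul_single hk).1, one_smul]
  · exact or_iff_not_imp_left.mpr fun hk =>
      (A.one_apply_eq_one_and_single_mul_single (mem_support_iff.mpr hk)).1
end

section
/- Let A = ι →₀ ℕ be a transitive finite-rank ℕSet algebra. Then there exists exactly one function φ : (ι →₀ ℕ) → ℝ that is additive (φ(a + b) = φ(a) + φ(b)), multiplicative (φ(a * b) = φ(a)·φ(b)), unital (φ(1) = 1), and satisfies φ(e_i) ≥ 0 for all i ∈ ι; moreover, this unique φ in fact satisfies φ(e_i) > 0 for every i ∈ ι. -/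
open Finsupp

/-!
Let `X = ∑ i, e_i`. By transitivity the real matrix of right multiplication by `X` has strictly
positive entries, so by Perron's theorem it has a positive eigenvector `R`, and its eigenspace
through `R` is a line. Left multiplications commute with right multiplications, hence preserve
that line: `R` is a common eigenvector of all left multiplications `L_a`, and the eigenvalues
`a ↦ f a` form a character, positive on simple elements by transitivity again.

If `φ` is any character that is non-negative on simple elements, the row vector `d = (φ e_k)_k`
satisfies `d L_a = φ(a) d`. Pairing with `R` gives `φ(a) (d ⬝ R) = f(a) (d ⬝ R)`, and `d ⬝ R > 0`
because `d ≥ 0` is nonzero (`φ 1 = 1`), so `φ = f`.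
-/

open scoped Matrix

theorem AddMonoidHom.apply_eq_sum_smul_single {ι M : Type*} [Fintype ι] [AddCommMonoid M]
    (g : (ι →₀ ℕ) →+ M) (a : ι →₀ ℕ) : g a = ∑ k, a k • g (Finsupp.single k 1) := by
  calc g a = g (∑ k, a k • Finsupp.single k 1) := by
        simp only [smul_single_one, Finsupp.univ_sum_single]
    _ = _ := by simp only [map_sum, map_nsmul]

namespace Matrix

variable {ι : Type*} [Fintype ι] {P : Matrix ι ι ℝ}

theorem mulVec_pos_of_pos (hP : ∀ i j, 0 < P i j) {u : ι → ℝ} (hu : 0 < u) (i : ι) :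
    0 < (P *ᵥ u) i := by
  obtain ⟨hu₀, j, hj⟩ := Pi.lt_def.1 hu
  exact Finset.sum_pos' (fun k _ => mul_nonneg (hP i k).le (hu₀ k))
    ⟨j, Finset.mem_univ j, mul_pos (hP i j) hj⟩

theorem eq_smul_of_mulVec_eq_smul [Nonempty ι] (hP : ∀ i j, 0 < P i j) {R w : ι → ℝ} {r : ℝ}
    (hR : ∀ k, 0 < R k) (hRe : P *ᵥ R = r • R) (hw : P *ᵥ w = r • w) :
    ∃ t : ℝ, w = t • R := by
  obtain ⟨k₀, -, hk₀⟩ := Finset.univ.exists_min_image (fun k => w k / R k) Finset.univ_nonempty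
  set t := w k₀ / R k₀
  have hu : P *ᵥ (w - t • R) = r • (w - t • R) := by
    rw [mulVec_sub, mulVec_smul, hw, hRe, smul_sub, smul_comm]
  have hu₀ : 0 ≤ w - t • R := fun k =>
    sub_nonneg.2 ((le_div_iff₀ (hR k)).1 (hk₀ k (Finset.mem_univ k)))
  have hk₀ : (w - t • R) k₀ = 0 := by
    simp [t, div_mul_cancel₀ _ (hR k₀).ne']
  refine ⟨t, sub_eq_zero.1 (hu₀.eq_of_not_lt fun hlt => ?_).symm⟩
  have := mulVec_pos_of_pos hP hlt k₀
  rw [hu, Pi.smul_apply, hk₀, smul_zero] at this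
  exact this.false

variable [Nonempty ι]

noncomputable def collatzWielandt (P : Matrix ι ι ℝ) (v : ι → ℝ) : ℝ :=
  Finset.univ.inf' Finset.univ_nonempty fun k => (P *ᵥ v) k / v k

theorem collatzWielandt_mul_le {v : ι → ℝ} (hv : ∀ k, 0 < v k) (k : ι) :
    collatzWielandt P v * v k ≤ (P *ᵥ v) k :=
  (le_div_iff₀ (hv k)).1 (Finset.inf'_le _ (Finset.mem_univ k))

theorem lt_collatzWielandt {v : ι → ℝ} {c : ℝ} (hv : ∀ k, 0 < v k)
    (h : ∀ k, c * v k < (P *ᵥ v) k) : c < collatzWielandt P v :=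
  (Finset.lt_inf'_iff _).2 fun k _ => (lt_div_iff₀ (hv k)).2 (h k)

/-- Perron's theorem: if `v` maximises `collatzWielandt P (P *ᵥ v)` on the standard simplex,
then `P *ᵥ v` is a positive eigenvector. -/
theorem exists_pos_eigenvector (hP : ∀ i j, 0 < P i j) :
    ∃ (r : ℝ) (R : ι → ℝ), (∀ k, 0 < R k) ∧ P *ᵥ R = r • R := by
  classical
  have hpos : ∀ v ∈ stdSimplex ℝ ι, ∀ k, 0 < (P *ᵥ v) k := by
    refine fun v hv => mulVec_pos_of_pos hP (Pi.lt_def.2 ⟨hv.1, ?_⟩)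
    by_contra! h
    have : ∑ k, v k = 0 := Finset.sum_eq_zero fun k _ => le_antisymm (h k) (hv.1 k)
    exact zero_ne_one (this.symm.trans hv.2)
  have hcont : ContinuousOn (fun v => collatzWielandt P (P *ᵥ v)) (stdSimplex ℝ ι) :=
    ContinuousOn.finset_inf'_apply _ fun k _ =>
      ContinuousOn.div (by fun_prop) (by fun_prop) fun v hv => (hpos v hv k).ne'
  obtain ⟨v₀, hv₀, hmax⟩ := (isCompact_stdSimplex ℝ ι).exists_isMaxOn
    ⟨_, single_mem_stdSimplex ℝ (Classical.arbitrary ι)⟩ hcont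
  set w := P *ᵥ v₀
  have hw := hpos v₀ hv₀
  refine ⟨collatzWielandt P w, w, hw, ?_⟩
  by_contra hne
  have hlt : ∀ k, collatzWielandt P w * (P *ᵥ w) k < (P *ᵥ (P *ᵥ w)) k := by
    intro k
    have hle : collatzWielandt P w • w ≤ P *ᵥ w := collatzWielandt_mul_le hw
    have := mulVec_pos_of_pos hP (sub_pos.2 (lt_of_le_of_ne hle (Ne.symm hne))) k
    rwa [mulVec_sub, mulVec_smul, Pi.sub_apply, Pi.smul_apply, smul_eq_mul, sub_pos] at this
  -- `w` rescaled into the simplex would beat the maximum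
  set s := ∑ k, w k
  have hs : 0 < s := Finset.sum_pos (fun k _ => hw k) Finset.univ_nonempty
  have hv₁ : s⁻¹ • w ∈ stdSimplex ℝ ι :=
    ⟨fun k => mul_nonneg (inv_nonneg.2 hs.le) (hw k).le,
      by simp [← Finset.mul_sum, inv_mul_cancel₀ hs.ne', s]⟩
  refine (hmax hv₁).not_gt (lt_collatzWielandt (hpos _ hv₁) fun k => ?_)
  simp only [mulVec_smul, Pi.smul_apply, smul_eq_mul, mul_left_comm _ s⁻¹]
  exact mul_lt_mul_of_pos_left (hlt k) (inv_pos.2 hs)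

end Matrix

namespace NSetAlgebra

variable {ι : Type*} (A : NSetAlgebra ι)

noncomputable def leftMulMatrix (a : ι →₀ ℕ) : Matrix ι ι ℝ :=
  Matrix.of fun k j => (A.mul a (Finsupp.single j 1) k : ℝ)

noncomputable def rightMulMatrix (b : ι →₀ ℕ) : Matrix ι ι ℝ :=
  Matrix.of fun k j => (A.mul (Finsupp.single j 1) b k : ℝ)

structure IsCharacter (φ : (ι →₀ ℕ) → ℝ) : Prop where
  map_add : ∀ a b, φ (a + b) = φ a + φ b
  map_mul : ∀ a b, φ (A.mul a b) = φ a * φ b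
  map_one : φ A.one = 1

theorem leftMulMatrix_add (a b : ι →₀ ℕ) :
    A.leftMulMatrix (a + b) = A.leftMulMatrix a + A.leftMulMatrix b := by
  ext k j
  simp [leftMulMatrix, A.right_distrib]

theorem leftMulMatrix_one [DecidableEq ι] : A.leftMulMatrix A.one = 1 := by
  ext k j
  simp [leftMulMatrix, A.one_mul, Matrix.one_apply, Finsupp.single_apply, eq_comm]

theorem Transitive.exists_mul_apply_pos {A : NSetAlgebra ι} (hA : A.Transitive) (i k : ι) :
    ∃ v, 0 < A.mul (Finsupp.single i 1) (Finsupp.single v 1) k := by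
  obtain ⟨v, hv⟩ := (hA i k).2
  exact ⟨v, lt_of_lt_of_le Nat.one_pos (by simpa using hv k)⟩

section Fintype

variable [Fintype ι]

theorem mul_apply_eq_sum_right (a c : ι →₀ ℕ) (k : ι) :
    A.mul a c k = ∑ m, c m * A.mul a (Finsupp.single m 1) k := by
  let g : (ι →₀ ℕ) →+ (ι →₀ ℕ) := ⟨⟨A.mul a, A.mul_zero a⟩, A.left_distrib a⟩
  simpa [g, Finsupp.finsetSum_apply] using DFunLike.congr_fun (g.apply_eq_sum_smul_single c) k

theorem mul_apply_eq_sum_left (c b : ι →₀ ℕ) (k : ι) :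
    A.mul c b k = ∑ m, c m * A.mul (Finsupp.single m 1) b k := by
  let g : (ι →₀ ℕ) →+ (ι →₀ ℕ) := ⟨⟨(A.mul · b), A.zero_mul b⟩, fun x y => A.right_distrib x y b⟩
  simpa [g, Finsupp.finsetSum_apply] using DFunLike.congr_fun (g.apply_eq_sum_smul_single c) k

theorem leftMulMatrix_mul (a b : ι →₀ ℕ) :
    A.leftMulMatrix (A.mul a b) = A.leftMulMatrix a * A.leftMulMatrix b := by
  ext k j
  simp only [leftMulMatrix, Matrix.mul_apply, Matrix.of_apply]
  rw [A.mul_assoc, A.mul_apply_eq_sum_right a]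
  push_cast
  simp only [mul_comm]

theorem commute_leftMulMatrix_rightMulMatrix (a b : ι →₀ ℕ) :
    Commute (A.leftMulMatrix a) (A.rightMulMatrix b) := by
  ext k j
  have h := A.mul_apply_eq_sum_left (A.mul a (Finsupp.single j 1)) b k
  rw [A.mul_assoc, A.mul_apply_eq_sum_right] at h
  simp only [leftMulMatrix, rightMulMatrix, Matrix.mul_apply, Matrix.of_apply]
  exact_mod_cast (by simpa [mul_comm] using h)

theorem rightMulMatrix_sum_single_pos (hA : A.Transitive) (k j : ι) :
    0 < A.rightMulMatrix (∑ i, Finsupp.single i 1) k j := by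
  obtain ⟨v, hv⟩ := hA.exists_mul_apply_pos j k
  simp only [rightMulMatrix, Matrix.of_apply, Nat.cast_pos]
  rw [A.mul_apply_eq_sum_right]
  refine lt_of_lt_of_le ?_ (Finset.single_le_sum (fun m _ => Nat.zero_le _) (Finset.mem_univ v))
  simpa using hv

theorem leftMulMatrix_single_mulVec_pos (hA : A.Transitive) {R : ι → ℝ} (hR : ∀ k, 0 < R k)
    (i k : ι) : 0 < (A.leftMulMatrix (Finsupp.single i 1) *ᵥ R) k := by
  obtain ⟨v, hv⟩ := hA.exists_mul_apply_pos i k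
  exact Finset.sum_pos' (fun j _ => mul_nonneg (Nat.cast_nonneg _) (hR j).le)
    ⟨v, Finset.mem_univ v, mul_pos (Nat.cast_pos.2 hv) (hR v)⟩

theorem exists_common_eigenvector [Nonempty ι] (hA : A.Transitive) :
    ∃ R : ι → ℝ, (∀ k, 0 < R k) ∧ ∀ a, ∃ t : ℝ, A.leftMulMatrix a *ᵥ R = t • R := by
  have hP := A.rightMulMatrix_sum_single_pos hA
  obtain ⟨r, R, hR, hRe⟩ := Matrix.exists_pos_eigenvector hP
  refine ⟨R, hR, fun a => Matrix.eq_smul_of_mulVec_eq_smul hP hR hRe ?_⟩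
  rw [Matrix.mulVec_mulVec, ← (A.commute_leftMulMatrix_rightMulMatrix a _).eq,
    ← Matrix.mulVec_mulVec, hRe, Matrix.mulVec_smul]

variable {R : ι → ℝ} {f : (ι →₀ ℕ) → ℝ}

theorem isCharacter_of_leftMulMatrix_mulVec (hR : R ≠ 0)
    (hf : ∀ a, A.leftMulMatrix a *ᵥ R = f a • R) : A.IsCharacter f where
  map_add a b := smul_left_injective ℝ hR <| by
    simp only [← hf, leftMulMatrix_add, Matrix.add_mulVec, add_smul]
  map_mul a b := smul_left_injective ℝ hR <| by
    change f (A.mul a b) • R = (f a * f b) • R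
    rw [← hf, leftMulMatrix_mul, ← Matrix.mulVec_mulVec, hf, Matrix.mulVec_smul, hf, smul_smul,
      mul_comm]
  map_one := smul_left_injective ℝ hR <| by
    classical
    simp only [← hf, leftMulMatrix_one, Matrix.one_mulVec, one_smul]

theorem apply_single_pos_of_leftMulMatrix_mulVec (hA : A.Transitive) (hR : ∀ k, 0 < R k)
    (hf : ∀ a, A.leftMulMatrix a *ᵥ R = f a • R) (i : ι) : 0 < f (Finsupp.single i 1) := by
  have := A.leftMulMatrix_single_mulVec_pos hA hR i i
  rw [hf, Pi.smul_apply, smul_eq_mul] at this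
  exact pos_of_mul_pos_left this (hR i).le

variable {A} {φ : (ι →₀ ℕ) → ℝ}

theorem IsCharacter.apply_eq_sum (hφ : A.IsCharacter φ) (a : ι →₀ ℕ) :
    φ a = ∑ k, a k * φ (Finsupp.single k 1) := by
  simpa using (AddMonoidHom.mk' φ hφ.map_add).apply_eq_sum_smul_single a

theorem IsCharacter.vecMul_leftMulMatrix (hφ : A.IsCharacter φ) (a : ι →₀ ℕ) :
    (fun k => φ (Finsupp.single k 1)) ᵥ* A.leftMulMatrix a =
      φ a • fun k => φ (Finsupp.single k 1) := by
  ext j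
  simp only [Matrix.vecMul, dotProduct, leftMulMatrix, Matrix.of_apply, Pi.smul_apply,
    smul_eq_mul, ← hφ.map_mul, hφ.apply_eq_sum (A.mul a _), mul_comm]

theorem IsCharacter.eq_of_leftMulMatrix_mulVec (hφ : A.IsCharacter φ)
    (hφ₀ : ∀ i, 0 ≤ φ (Finsupp.single i 1)) (hR : ∀ k, 0 < R k)
    (hf : ∀ a, A.leftMulMatrix a *ᵥ R = f a • R) : φ = f := by
  set d := fun k => φ (Finsupp.single k 1)
  obtain ⟨k, hk⟩ : ∃ k, 0 < d k := by
    by_contra! h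
    have hd : ∀ k, φ (Finsupp.single k 1) = 0 := fun k => le_antisymm (h k) (hφ₀ k)
    have := hφ.map_one
    simp [hφ.apply_eq_sum A.one, hd] at this
  have hdR : 0 < d ⬝ᵥ R := Finset.sum_pos' (fun j _ => mul_nonneg (hφ₀ j) (hR j).le)
    ⟨k, Finset.mem_univ k, mul_pos hk (hR k)⟩
  funext a
  refine mul_right_cancel₀ hdR.ne' ?_
  calc φ a * (d ⬝ᵥ R) = (d ᵥ* A.leftMulMatrix a) ⬝ᵥ R := by
        rw [hφ.vecMul_leftMulMatrix, smul_dotProduct, smul_eq_mul]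
    _ = d ⬝ᵥ (A.leftMulMatrix a *ᵥ R) := (Matrix.dotProduct_mulVec _ _ _).symm
    _ = f a * (d ⬝ᵥ R) := by rw [hf, dotProduct_smul, smul_eq_mul]

end Fintype

end NSetAlgebra

open NSetAlgebra in
/-- A transitive finite-rank ℕSet algebra has a unique character that is additive,
multiplicative, unital and non-negative on simple elements; moreover this unique
character is strictly positive on simple elements. -/
theorem stmt8 {ι : Type*} [Fintype ι] [Nonempty ι]
    (A : NSetAlgebra ι) (hA : A.Transitive) :
    (∃! φ : (ι →₀ ℕ) → ℝ,
      (∀ a b, φ (a + b) = φ a + φ b) ∧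
      (∀ a b, φ (A.mul a b) = φ a * φ b) ∧
      φ A.one = 1 ∧
      (∀ i : ι, 0 ≤ φ (Finsupp.single i 1))) ∧
    (∀ φ : (ι →₀ ℕ) → ℝ,
      ((∀ a b, φ (a + b) = φ a + φ b) ∧
       (∀ a b, φ (A.mul a b) = φ a * φ b) ∧
       φ A.one = 1 ∧
       (∀ i : ι, 0 ≤ φ (Finsupp.single i 1))) →
      ∀ i : ι, 0 < φ (Finsupp.single i 1)) := by
  obtain ⟨R, hR, hRe⟩ := A.exists_common_eigenvector hA
  choose f hf using hRe
  have hf₀ : A.IsCharacter f :=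
    A.isCharacter_of_leftMulMatrix_mulVec
      (fun h => (hR (Classical.arbitrary ι)).ne' (congrFun h _)) hf
  have hpos := A.apply_single_pos_of_leftMulMatrix_mulVec hA hR hf
  have huniq : ∀ φ, A.IsCharacter φ → (∀ i, 0 ≤ φ (Finsupp.single i 1)) → φ = f :=
    fun φ hφ hφ₀ => hφ.eq_of_leftMulMatrix_mulVec hφ₀ hR hf
  refine ⟨⟨f, ⟨hf₀.map_add, hf₀.map_mul, hf₀.map_one, fun i => (hpos i).le⟩, ?_⟩, ?_⟩
  · rintro φ ⟨hadd, hmul, hone, hφ₀⟩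
    exact huniq φ ⟨hadd, hmul, hone⟩ hφ₀
  · rintro φ ⟨hadd, hmul, hone, hφ₀⟩
    rw [huniq φ ⟨hadd, hmul, hone⟩ hφ₀]
    exact hpos
end

section
/- Let A = ι →₀ ℕ be a transitive finite-rank ℕSet algebra with Frobenius–Perron character φ_A. If there exists a map f : (ι →₀ ℕ) → ℕ that is additive, multiplicative and unital (a morphism of ℕSet algebras to the rank-one algebra ℕ), then φ_A(a) = f(a) for all a; in particular φ_A(a) is a natural number for every a ∈ ι →₀ ℕ. (This is the combinatorial content of the corollary: if a fusion category over K admits a tensor functor to Vec_K, then all Frobenius–Perron dimensions of its objects are natural numbers.) -/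
open Finsupp

/-!
Restricted to the simple objects, `φ` and `f` give positive vectors `x`, `y` with
`x i * x j = ∑ k, N i j k * x k`, and likewise for `y` (positivity of `f` comes from
transitivity). If `j` minimises `y j / x j`, expanding `y u * y j` and bounding each `y k`
below by `(y j / x j) * x k` gives `y u ≥ x u`; by symmetry `x = y`, and additivity does the rest.
-/

open Finset

section

variable {ι : Type*} [Fintype ι]

theorem eq_sum_smul_apply_single_of_map_add {M : Type*} [AddCancelCommMonoid M]
    {g : (ι →₀ ℕ) → M} (hg : ∀ a b, g (a + b) = g a + g b) (a : ι →₀ ℕ) :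
    g a = ∑ k, a k • g (single k 1) := by
  let G : (ι →₀ ℕ) →+ M :=
    { toFun := g
      map_zero' := by simpa using hg 0 0
      map_add' := hg }
  calc g a = G (∑ k, a k • single k 1) := by
        simp_rw [Finsupp.smul_single_one, Finsupp.univ_sum_single]
        rfl
    _ = ∑ k, a k • g (single k 1) := by
        simp_rw [map_sum, map_nsmul]
        rfl

theorem eq_sum_mul_apply_single_of_map_add {g : (ι →₀ ℕ) → ℝ}
    (hg : ∀ a b, g (a + b) = g a + g b) (a : ι →₀ ℕ) :
    g a = ∑ k, (a k : ℝ) * g (single k 1) := by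
  simp_rw [eq_sum_smul_apply_single_of_map_add hg a, nsmul_eq_mul]

theorem le_of_mul_eq_sum_of_pos {c : ι → ι → ι → ℝ} (hc : ∀ i j k, 0 ≤ c i j k) {x y : ι → ℝ}
    (hx : ∀ i, 0 < x i) (hy : ∀ i, 0 < y i)
    (hxc : ∀ i j, x i * x j = ∑ k, c i j k * x k)
    (hyc : ∀ i j, y i * y j = ∑ k, c i j k * y k) : x ≤ y := by
  intro u
  obtain ⟨j, -, hj⟩ := exists_min_image univ (fun k => y k / x k) ⟨u, mem_univ u⟩
  have hmin (k : ι) : y j * x k ≤ y k * x j :=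
    (div_le_div_iff₀ (hx j) (hx k)).mp (hj k (mem_univ k))
  have key : y j * x j * x u ≤ y j * x j * y u :=
    calc y j * x j * x u = y j * (x u * x j) := by ring
      _ = ∑ k, c u j k * (y j * x k) := by
          rw [hxc, Finset.mul_sum]
          exact sum_congr rfl fun k _ => by ring
      _ ≤ ∑ k, c u j k * (y k * x j) :=
          sum_le_sum fun k _ => mul_le_mul_of_nonneg_left (hmin k) (hc u j k)
      _ = y j * x j * y u := by
          simp_rw [← mul_assoc, ← Finset.sum_mul, ← hyc]
          ring
  exact le_of_mul_le_mul_left key (mul_pos (hy j) (hx j))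

theorem eq_of_mul_eq_sum_of_pos {c : ι → ι → ι → ℝ} (hc : ∀ i j k, 0 ≤ c i j k) {x y : ι → ℝ}
    (hx : ∀ i, 0 < x i) (hy : ∀ i, 0 < y i)
    (hxc : ∀ i j, x i * x j = ∑ k, c i j k * x k)
    (hyc : ∀ i j, y i * y j = ∑ k, c i j k * y k) : x = y :=
  le_antisymm (le_of_mul_eq_sum_of_pos hc hx hy hxc hyc) (le_of_mul_eq_sum_of_pos hc hy hx hyc hxc)

namespace NSetAlgebra

theorem mul_eq_sum_N (A : NSetAlgebra ι) {χ : (ι →₀ ℕ) → ℝ}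
    (hadd : ∀ a b, χ (a + b) = χ a + χ b) (hmul : ∀ a b, χ (A.mul a b) = χ a * χ b) (i j : ι) :
    χ (single i 1) * χ (single j 1) = ∑ k, (A.N i j k : ℝ) * χ (single k 1) := by
  rw [← hmul, eq_sum_mul_apply_single_of_map_add hadd]
  rfl

theorem Transitive.pos_apply_single {A : NSetAlgebra ι} (hA : A.Transitive)
    {f : (ι →₀ ℕ) → ℕ} (hadd : ∀ a b, f (a + b) = f a + f b)
    (hmul : ∀ a b, f (A.mul a b) = f a * f b) {a : ι →₀ ℕ} (ha : f a ≠ 0) (i : ι) :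
    0 < f (single i 1) := by
  have hmono {b c : ι →₀ ℕ} (hbc : b ≤ c) : f b ≤ f c := by
    obtain ⟨d, rfl⟩ := le_iff_exists_add.mp hbc
    rw [hadd]
    exact Nat.le_add_right _ _
  obtain ⟨k, -, hk⟩ : ∃ k ∈ univ, a k • f (single k 1) ≠ 0 :=
    exists_ne_zero_of_sum_ne_zero (eq_sum_smul_apply_single_of_map_add hadd a ▸ ha)
  have hfk : 0 < f (single k 1) := Nat.pos_of_ne_zero fun h => hk (by rw [h, smul_zero])
  obtain ⟨u, hu⟩ := (hA i k).1
  have hle : f (single k 1) ≤ f (single u 1) * f (single i 1) := hmul _ _ ▸ hmono hu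
  exact Nat.pos_of_mul_pos_left (hfk.trans_le hle)

end NSetAlgebra

end

open NSetAlgebra in
theorem stmt15_general {ι : Type*} [Fintype ι]
    (A : NSetAlgebra ι) (hA : A.Transitive)
    (φ : (ι →₀ ℕ) → ℝ) (hφ : A.IsFPCharacter φ)
    (f : (ι →₀ ℕ) → ℕ)
    (hadd : ∀ a b, f (a + b) = f a + f b)
    (hmul : ∀ a b, f (A.mul a b) = f a * f b)
    (hone : f A.one = 1) :
    ∀ a : ι →₀ ℕ, φ a = (f a : ℝ) := by
  have hadd' (a b : ι →₀ ℕ) : (f (a + b) : ℝ) = f a + f b := by rw [hadd, Nat.cast_add]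
  have hmul' (a b : ι →₀ ℕ) : (f (A.mul a b) : ℝ) = f a * f b := by rw [hmul, Nat.cast_mul]
  have hf_pos (i : ι) : (0 : ℝ) < f (single i 1) :=
    Nat.cast_pos.mpr (hA.pos_apply_single hadd hmul (hone ▸ one_ne_zero) i)
  have hsimple (i : ι) : φ (single i 1) = f (single i 1) :=
    congrFun (eq_of_mul_eq_sum_of_pos (fun i j k => Nat.cast_nonneg (A.N i j k)) hφ.pos hf_pos
      (A.mul_eq_sum_N hφ.map_add hφ.map_mul)
      (A.mul_eq_sum_N (χ := fun a => (f a : ℝ)) hadd' hmul')) i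
  intro a
  rw [eq_sum_mul_apply_single_of_map_add hφ.map_add a,
    eq_sum_mul_apply_single_of_map_add (g := fun a => (f a : ℝ)) hadd' a]
  simp only [hsimple]

open NSetAlgebra in
/-- If a transitive finite-rank ℕSet algebra admits a morphism to the rank-one
algebra `ℕ`, then its FP character agrees with that morphism; in particular all FP
dimensions are natural numbers. -/
theorem stmt15 {ι : Type*} [Fintype ι] [Nonempty ι]
    (A : NSetAlgebra ι) (hA : A.Transitive)
    (φ : (ι →₀ ℕ) → ℝ) (hφ : A.IsFPCharacter φ)
    (f : (ι →₀ ℕ) → ℕ)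
    (hadd : ∀ a b, f (a + b) = f a + f b)
    (hmul : ∀ a b, f (A.mul a b) = f a * f b)
    (hone : f A.one = 1) :
    ∀ a : ι →₀ ℕ, φ a = (f a : ℝ) :=
  stmt15_general A hA φ hφ f hadd hmul hone
end
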